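/- arXiv:2001.00245 — 5 statements merged into one kernel-verified Lean document; each statement's English description precedes it below -/
import Mathlib

section
/- Let n ≥ 1 and 0 ≤ k ≤ n−1 be integers and let a ∈ (0,1). For every function f : ℝ → ℝ that is n times continuously differentiable on [0,1] and satisfies f^{(j)}(0) = f^{(j)}(1) = 0 for all j = 0,…,n−1, one has f^{(k)}(a) = ∫₀^a f^{(n)}(x)·G₁^{(n)}(x) dx + ∫_a^1 f^{(n)}(x)·G₂^{(n)}(x) dx, where G₁ and G₂ are the two polynomial pieces of the extremal spline g_{n,k}. -/
/-!
Both pieces are polynomials of degree `< 2n`. The inner sums of `h_{n,k}` truncate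
`(1 - X)⁻ⁿ`, so `bⁿ⁻ᵏ (1 - X)ⁿ h_{n,k}(X, b) ≡ (b - X)^(2n-1-k)` modulo `Xⁿ`. Together with the
symmetry `x ↦ 1 - x` this makes `G₁ - G₂ - (-1)ⁿ (a - X)^(2n-1-k) / (2n-1-k)!` divisible by both
`Xⁿ` and `(1 - X)ⁿ`, hence zero, so `G₁⁽ⁿ⁾ = G₂⁽ⁿ⁾ + (a - x)^(n-1-k) / (n-1-k)!`. Repeated
integration by parts, with the boundary values of `f` vanishing, shows that `f⁽ⁿ⁾` is orthogonal
on `[0, 1]` to the polynomial `G₂⁽ⁿ⁾` of degree `< n`, and Taylor's formula with integral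
remainder at `0` gives `f⁽ᵏ⁾(a) = ∫₀ᵃ f⁽ⁿ⁾(x) (a - x)^(n-1-k) / (n-1-k)! dx`.
-/

open Finset

/-- The polynomial `h_{n,k}(x,a)`. -/
noncomputable def hpoly (n k : ℕ) (x a : ℝ) : ℝ :=
  ∑ l ∈ Finset.range n,
    (-1 : ℝ) ^ (n - 1 - l) * (Nat.choose (2 * n - 1 - k) (n - 1 - l) : ℝ) *
      x ^ (n - 1 - l) * a ^ l *
      ∑ m ∈ Finset.range (l + 1), (Nat.choose (n - 1 + m) m : ℝ) * x ^ m

/-- The piece of the extremal spline `g_{n,k}` on `[0,a]`. -/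
noncomputable def G1 (n k : ℕ) (a : ℝ) (x : ℝ) : ℝ :=
  ((-1 : ℝ) ^ (n - k - 1) / (Nat.factorial (2 * n - k - 1) : ℝ)) *
    (1 - a) ^ (n - k) * x ^ n * hpoly n k (1 - x) (1 - a)

/-- The piece of the extremal spline `g_{n,k}` on `[a,1]`. -/
noncomputable def G2 (n k : ℕ) (a : ℝ) (x : ℝ) : ℝ :=
  ((-1 : ℝ) ^ (n - 1) / (Nat.factorial (2 * n - k - 1) : ℝ)) *
    a ^ (n - k) * (1 - x) ^ n * hpoly n k x a

open Polynomial
open scoped Nat Interval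
open MeasureTheory intervalIntegral

namespace Polynomial

lemma X_pow_dvd_sub_iff_trunc_eq {R : Type*} [CommRing R] {p q : R[X]} {m : ℕ} :
    X ^ m ∣ p - q ↔
      PowerSeries.trunc m (p : PowerSeries R) = PowerSeries.trunc m (q : PowerSeries R) := by
  simp only [X_pow_dvd_iff, coeff_sub, sub_eq_zero, Polynomial.ext_iff, PowerSeries.coeff_trunc,
    Polynomial.coeff_coe]
  constructor <;> intro h d
  · split_ifs with hd
    exacts [h d hd, rfl]
  · intro hd
    simpa [hd] using h d

lemma X_pow_dvd_one_sub_X_pow_mul_trunc_invOneSubPow_sub_one (R : Type*) [CommRing R] (n m : ℕ) :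
    X ^ m ∣ (1 - X : R[X]) ^ n * PowerSeries.trunc m (PowerSeries.invOneSubPow R n).val - 1 := by
  rw [X_pow_dvd_sub_iff_trunc_eq]
  push_cast
  rw [PowerSeries.trunc_mul_trunc, ← PowerSeries.invOneSubPow_inv_eq_one_sub_pow,
    Units.inv_val]

lemma eq_zero_of_X_pow_dvd_of_one_sub_X_pow_dvd {R : Type*} [CommRing R] [IsDomain R] {p : R[X]}
    {n : ℕ} (hdeg : p.natDegree < 2 * n) (h0 : X ^ n ∣ p) (h1 : (1 - X) ^ n ∣ p) : p = 0 := by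
  by_contra hp
  have hcop : IsCoprime (X ^ n : R[X]) ((1 - X) ^ n) := IsCoprime.pow ⟨1, 1, by ring⟩
  have := natDegree_le_of_dvd (hcop.mul_dvd h0 h1) hp
  have hX : (1 - X : R[X]).natDegree = 1 := by compute_degree!
  have hX0 : (1 - X : R[X]) ≠ 0 := ne_zero_of_natDegree_gt (n := 0) (by omega)
  rw [natDegree_mul (pow_ne_zero _ X_ne_zero) (pow_ne_zero _ hX0), natDegree_X_pow, natDegree_pow,
    hX] at this
  omega

lemma iteratedDeriv_eval (p : ℝ[X]) (j : ℕ) :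
    iteratedDeriv j (fun x => p.eval x) = fun x => (derivative^[j] p).eval x := by
  induction j generalizing p with
  | zero => simp
  | succ j ih =>
    rw [iteratedDeriv_succ', Function.iterate_succ_apply, ← ih]
    exact congrArg _ (_root_.funext fun _ => p.deriv)

end Polynomial

noncomputable def taylorKernel (a : ℝ) (m : ℕ) : ℝ[X] := C ((m ! : ℝ)⁻¹) * (C a - X) ^ m

lemma derivative_taylorKernel_succ (a : ℝ) (m : ℕ) :
    derivative (taylorKernel a (m + 1)) = -taylorKernel a m := by
  simp only [taylorKernel, derivative_C_mul, derivative_pow, derivative_sub, derivative_C,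
    derivative_X, Nat.factorial_succ]
  have h : C (((m + 1 : ℕ) : ℝ)⁻¹) * C ((m + 1 : ℕ) : ℝ) = 1 := by
    rw [← C_mul, inv_mul_cancel₀ (by positivity), C_1]
  rw [Nat.add_sub_cancel, Nat.cast_mul, mul_inv, C_mul]
  linear_combination (-(C ((m ! : ℝ)⁻¹) * (C a - X) ^ m)) * h

lemma iterate_derivative_taylorKernel (a : ℝ) (m j : ℕ) :
    derivative^[j] (taylorKernel a (m + j)) = C ((-1) ^ j) * taylorKernel a m := by
  induction j with
  | zero => simp
  | succ j ih =>
    rw [Function.iterate_succ_apply, ← add_assoc, derivative_taylorKernel_succ,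
      iterate_derivative_neg, ih, pow_succ, C_mul, C_neg, C_1]
    ring

section IteratedDerivWithin

variable {n : ℕ} {f : ℝ → ℝ} {s : Set ℝ}

lemma ContDiffOn.hasDerivWithinAt_iteratedDerivWithin (hf : ContDiffOn ℝ n f s)
    (hs : UniqueDiffOn ℝ s) {j : ℕ} (hj : j < n) {x : ℝ} (hx : x ∈ s) :
    HasDerivWithinAt (iteratedDerivWithin j f s) (iteratedDerivWithin (j + 1) f s x) s x := by
  rw [iteratedDerivWithin_succ]
  exact (hf.differentiableOn_iteratedDerivWithin (by exact_mod_cast hj) hs x hx).hasDerivWithinAt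

lemma ContDiffOn.intervalIntegrable_iteratedDerivWithin_mul_eval (hf : ContDiffOn ℝ n f s)
    (hs : UniqueDiffOn ℝ s) {j : ℕ} (hj : j ≤ n) {c d : ℝ} (hcd : [[c, d]] ⊆ s) (R : ℝ[X]) :
    IntervalIntegrable (fun x => iteratedDerivWithin j f s x * R.eval x) volume c d :=
  (((hf.continuousOn_iteratedDerivWithin (by exact_mod_cast hj) hs).mono hcd).mul
    R.continuousOn).intervalIntegrable

lemma ContDiffOn.integral_iteratedDerivWithin_succ_mul_eval (hf : ContDiffOn ℝ n f s)
    (hs : UniqueDiffOn ℝ s) {j : ℕ} (hj : j < n) {c d : ℝ} (hcd : [[c, d]] ⊆ s) (R : ℝ[X]) :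
    ∫ x in c..d, iteratedDerivWithin (j + 1) f s x * R.eval x =
      iteratedDerivWithin j f s d * R.eval d - iteratedDerivWithin j f s c * R.eval c -
        ∫ x in c..d, iteratedDerivWithin j f s x * (derivative R).eval x := by
  have := integral_mul_deriv_eq_deriv_mul_of_hasDerivWithinAt
    (fun x _ => (R.hasDerivAt x).hasDerivWithinAt)
    (fun x hx => (hf.hasDerivWithinAt_iteratedDerivWithin hs hj (hcd hx)).mono hcd)
    ((derivative R).continuous.intervalIntegrable c d)
    (((hf.continuousOn_iteratedDerivWithin (by exact_mod_cast hj) hs).mono hcd).intervalIntegrable)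
  simpa only [mul_comm (eval _ _)] using this

lemma ContDiffOn.integral_iteratedDerivWithin_mul_eval_eq_zero (hf : ContDiffOn ℝ n f s)
    (hs : UniqueDiffOn ℝ s) {p q : ℝ} (hpq : [[p, q]] ⊆ s)
    (hp : ∀ j < n, iteratedDerivWithin j f s p = 0) (hq : ∀ j < n, iteratedDerivWithin j f s q = 0)
    {j : ℕ} (hj : j ≤ n) {R : ℝ[X]} (hR : derivative^[j] R = 0) :
    ∫ x in p..q, iteratedDerivWithin j f s x * R.eval x = 0 := by
  induction j generalizing R with
  | zero =>
    obtain rfl : R = 0 := hR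
    simp
  | succ j ih =>
    rw [hf.integral_iteratedDerivWithin_succ_mul_eval hs hj hpq, hp j hj, hq j hj,
      ih (by omega) (by rwa [← Function.iterate_succ_apply]), zero_mul, zero_mul, sub_self,
      sub_zero]

lemma ContDiffOn.iteratedDerivWithin_eq_integral_mul_taylorKernel (hf : ContDiffOn ℝ n f s)
    (hs : UniqueDiffOn ℝ s) {p a : ℝ} (hpa : [[p, a]] ⊆ s)
    (hp : ∀ j < n, iteratedDerivWithin j f s p = 0) {k i : ℕ} (hki : k + i < n) :
    iteratedDerivWithin k f s a =
      ∫ x in p..a, iteratedDerivWithin (k + i + 1) f s x * (taylorKernel a i).eval x := by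
  induction i with
  | zero =>
    rw [hf.integral_iteratedDerivWithin_succ_mul_eval hs hki hpa]
    simp [taylorKernel, hp k hki]
  | succ i ih =>
    rw [ih (by omega), ← add_assoc,
      hf.integral_iteratedDerivWithin_succ_mul_eval hs (j := k + i + 1) hki hpa,
      derivative_taylorKernel_succ, hp _ (by omega)]
    simp [taylorKernel]

end IteratedDerivWithin

noncomputable def hTerm (n k : ℕ) (b : ℝ) (i : ℕ) : ℝ[X] :=
  C (b ^ (n - 1 - i)) * (-X) ^ i * ((2 * n - 1 - k).choose i : ℝ[X])

-- `h_{n,k}(X, b)` summed over `i = n - 1 - l`; its inner sums are truncations of `(1 - X)⁻ⁿ`.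
noncomputable def hPoly (n k : ℕ) (b : ℝ) : ℝ[X] :=
  ∑ i ∈ range n, hTerm n k b i * PowerSeries.trunc (n - i) (PowerSeries.invOneSubPow ℝ n).val

lemma eval_hPoly (n k : ℕ) (b x : ℝ) : (hPoly n k b).eval x = hpoly n k x b := by
  rw [hPoly, hpoly, eval_finsetSum, ← sum_range_reflect]
  unfold hTerm
  refine sum_congr rfl fun l hl => ?_
  have hl : l < n := mem_range.1 hl
  rw [show n - 1 - (n - 1 - l) = l by omega, show n - (n - 1 - l) = l + 1 by omega]
  simp only [eval_mul, eval_C, eval_pow, eval_neg, eval_X, eval_natCast]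
  rw [PowerSeries.invOneSubPow_val_eq_mk_sub_one_add_choose_of_pos _ _ (by omega), eval,
    PowerSeries.eval₂_trunc_eq_sum_range, neg_pow]
  simp only [PowerSeries.coeff_mk, RingHom.id_apply, Nat.choose_symm_add]
  ring

lemma X_pow_dvd_one_sub_X_pow_mul_hPoly_sub (n k : ℕ) (b : ℝ) :
    X ^ n ∣ (1 - X) ^ n * hPoly n k b - ∑ i ∈ range n, hTerm n k b i := by
  rw [hPoly, mul_sum, ← sum_sub_distrib]
  refine dvd_sum fun i hi => ?_
  have hsplit : X ^ n = (X : ℝ[X]) ^ i * X ^ (n - i) := by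
    rw [← pow_add, Nat.add_sub_cancel' (mem_range.1 hi).le]
  have hXi : X ^ i ∣ hTerm n k b i :=
    ((pow_dvd_pow_of_dvd (dvd_neg.2 dvd_rfl) i).mul_left _).mul_right _
  rw [hsplit]
  convert mul_dvd_mul hXi (X_pow_dvd_one_sub_X_pow_mul_trunc_invOneSubPow_sub_one ℝ n (n - i))
    using 1
  ring

lemma X_pow_dvd_C_sub_X_pow_sub {n k : ℕ} (hk : k < n) (b : ℝ) :
    X ^ n ∣ (C b - X) ^ (2 * n - 1 - k) - C (b ^ (n - k)) * ∑ i ∈ range n, hTerm n k b i := by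
  rw [sub_eq_neg_add (C b), add_pow,
    ← sum_range_add_sum_Ico _ (show n ≤ 2 * n - 1 - k + 1 by omega), mul_sum]
  have hlow : ∑ i ∈ range n, (-X) ^ i * C b ^ (2 * n - 1 - k - i) *
      ((2 * n - 1 - k).choose i : ℝ[X]) = ∑ i ∈ range n, C (b ^ (n - k)) * hTerm n k b i := by
    refine sum_congr rfl fun i hi => ?_
    have hi : i < n := mem_range.1 hi
    rw [hTerm, ← C_pow, show 2 * n - 1 - k - i = n - k + (n - 1 - i) by omega, pow_add, C_mul]
    ring
  rw [hlow, add_sub_cancel_left]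
  refine dvd_sum fun i hi => ((pow_dvd_pow_of_dvd (dvd_neg.2 dvd_rfl) n).trans
    (pow_dvd_pow _ (mem_Ico.1 hi).1)).mul_right _ |>.mul_right _

lemma natDegree_hPoly_le (n k : ℕ) (b : ℝ) : (hPoly n k b).natDegree ≤ n - 1 := by
  refine natDegree_sum_le_of_forall_le _ _ fun i hi => natDegree_mul_le.trans ?_
  have hi : i < n := mem_range.1 hi
  have htrunc :
      (PowerSeries.trunc (n - i) (PowerSeries.invOneSubPow ℝ n).val).natDegree < n - i := by
    obtain ⟨m, hm⟩ : ∃ m, n - i = m + 1 := ⟨n - i - 1, by omega⟩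
    rw [hm]
    exact PowerSeries.natDegree_trunc_lt _ _
  have hterm : (hTerm n k b i).natDegree ≤ i := by
    rw [hTerm]
    compute_degree
  omega

noncomputable def splinePoly (n k : ℕ) (b : ℝ) : ℝ[X] :=
  (1 - X) ^ n * (C (b ^ (n - k)) * hPoly n k b)

lemma eval_splinePoly (n k : ℕ) (b x : ℝ) :
    (splinePoly n k b).eval x = (1 - x) ^ n * (b ^ (n - k) * hpoly n k x b) := by
  simp [splinePoly, eval_hPoly]

lemma natDegree_splinePoly_le (n k : ℕ) (b : ℝ) : (splinePoly n k b).natDegree ≤ 2 * n - 1 := by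
  have h1 : ((1 - X : ℝ[X]) ^ n).natDegree ≤ n := by compute_degree
  have h2 := (natDegree_C_mul_le (b ^ (n - k)) _).trans (natDegree_hPoly_le n k b)
  have := natDegree_mul_le (p := (1 - X : ℝ[X]) ^ n) (q := C (b ^ (n - k)) * hPoly n k b)
  rw [splinePoly]
  omega

lemma X_pow_dvd_splinePoly_sub {n k : ℕ} (hk : k < n) (b : ℝ) :
    X ^ n ∣ splinePoly n k b - (C b - X) ^ (2 * n - 1 - k) := by
  have := dvd_sub ((X_pow_dvd_one_sub_X_pow_mul_hPoly_sub n k b).mul_left (C (b ^ (n - k))))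
    (X_pow_dvd_C_sub_X_pow_sub hk b)
  convert this using 1
  rw [splinePoly]
  ring

lemma natDegree_splinePoly_comp_one_sub_X_le (n k : ℕ) (b : ℝ) :
    ((splinePoly n k b).comp (1 - X)).natDegree ≤ 2 * n - 1 := by
  refine natDegree_comp_le.trans ?_
  have : (1 - X : ℝ[X]).natDegree ≤ 1 := by compute_degree
  simpa using Nat.mul_le_mul (natDegree_splinePoly_le n k b) this

-- Both sides agree modulo `Xⁿ` and modulo `(1 - X)ⁿ` and have degree `< 2n`.
lemma splinePoly_comp_one_sub_X_sub_splinePoly {n k : ℕ} (hk : k < n) (a : ℝ) :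
    C ((-1) ^ (n - k - 1)) * (splinePoly n k (1 - a)).comp (1 - X) -
      C ((-1) ^ (n - 1)) * splinePoly n k a = C ((-1) ^ n) * (C a - X) ^ (2 * n - 1 - k) := by
  have hsign : (C ((-1) ^ (n - 1)) + C ((-1) ^ n) : ℝ[X]) = 0 := by
    obtain ⟨m, rfl⟩ : ∃ m, n = m + 1 := ⟨n - 1, by omega⟩
    simp [pow_succ]
  have hreflect : C ((-1) ^ (n - k - 1)) * (C (1 - a) - (1 - X)) ^ (2 * n - 1 - k) =
      C ((-1) ^ n) * (C a - X) ^ (2 * n - 1 - k) := by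
    rw [show (C (1 - a) - (1 - X) : ℝ[X]) = C (-1) * (C a - X) by simp, mul_pow, ← mul_assoc,
      ← C_pow, ← C_mul, ← pow_add, show n - k - 1 + (2 * n - 1 - k) = n + 2 * (n - k - 1) by omega,
      pow_add, pow_mul, neg_one_sq, one_pow, mul_one]
  rw [← sub_eq_zero]
  refine eq_zero_of_X_pow_dvd_of_one_sub_X_pow_dvd (n := n) ?_ ?_ ?_
  · have hpow : ((C a - X) ^ (2 * n - 1 - k)).natDegree ≤ 2 * n - 1 := by
      compute_degree
      omega
    refine (natDegree_sub_le_of_le (natDegree_sub_le_of_le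
      ((natDegree_C_mul_le _ _).trans (natDegree_splinePoly_comp_one_sub_X_le n k (1 - a)))
      ((natDegree_C_mul_le _ _).trans (natDegree_splinePoly_le n k a)))
      ((natDegree_C_mul_le _ _).trans hpow)).trans_lt ?_
    simp only [max_self]
    omega
  · have hcomp : X ^ n ∣ (splinePoly n k (1 - a)).comp (1 - X) :=
      ⟨_, by rw [splinePoly, mul_comp, pow_comp, sub_comp, one_comp, X_comp, sub_sub_cancel]⟩
    convert dvd_sub (hcomp.mul_left (C ((-1) ^ (n - k - 1))))
      ((X_pow_dvd_splinePoly_sub hk a).mul_left (C ((-1) ^ (n - 1)))) using 1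
    linear_combination (-(C a - X) ^ (2 * n - 1 - k)) * hsign
  · have hcomp := map_dvd (compRingHom (1 - X)) (X_pow_dvd_splinePoly_sub hk (1 - a))
    simp only [coe_compRingHom_apply, pow_comp, X_comp, sub_comp, C_comp] at hcomp
    convert dvd_sub (hcomp.mul_left (C ((-1) ^ (n - k - 1))))
      ((dvd_mul_right _ _ : (1 - X) ^ n ∣ splinePoly n k a).mul_left (C ((-1) ^ (n - 1)))) using 1
    unfold splinePoly
    linear_combination hreflect

noncomputable def G1Poly (n k : ℕ) (a : ℝ) : ℝ[X] :=
  C ((-1 : ℝ) ^ (n - k - 1) / ((2 * n - k - 1)! : ℝ)) * (splinePoly n k (1 - a)).comp (1 - X)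

noncomputable def G2Poly (n k : ℕ) (a : ℝ) : ℝ[X] :=
  C ((-1 : ℝ) ^ (n - 1) / ((2 * n - k - 1)! : ℝ)) * splinePoly n k a

lemma G1_eq_eval (n k : ℕ) (a : ℝ) : G1 n k a = fun x => (G1Poly n k a).eval x := by
  ext x
  simp only [G1, G1Poly, eval_mul, eval_C, eval_comp, eval_sub, eval_one, eval_X,
    eval_splinePoly, sub_sub_cancel]
  ring

lemma G2_eq_eval (n k : ℕ) (a : ℝ) : G2 n k a = fun x => (G2Poly n k a).eval x := by
  ext x
  simp only [G2, G2Poly, eval_mul, eval_C, eval_splinePoly]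
  ring

lemma G1Poly_sub_G2Poly {n k : ℕ} (hk : k < n) (a : ℝ) :
    G1Poly n k a - G2Poly n k a = C ((-1) ^ n) * taylorKernel a (2 * n - 1 - k) := by
  have h := splinePoly_comp_one_sub_X_sub_splinePoly hk a
  rw [G1Poly, G2Poly, taylorKernel, show 2 * n - k - 1 = 2 * n - 1 - k by omega]
  simp only [div_eq_mul_inv, C_mul] at h ⊢
  linear_combination C (((2 * n - 1 - k)! : ℝ)⁻¹) * h

lemma iteratedDeriv_G2 (n k : ℕ) (a : ℝ) :
    iteratedDeriv n (G2 n k a) = fun x => (derivative^[n] (G2Poly n k a)).eval x := by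
  rw [G2_eq_eval, iteratedDeriv_eval]

lemma iteratedDeriv_G1 {n k : ℕ} (hk : k < n) (a : ℝ) :
    iteratedDeriv n (G1 n k a) =
      fun x => (derivative^[n] (G2Poly n k a) + taylorKernel a (n - 1 - k)).eval x := by
  rw [G1_eq_eval, iteratedDeriv_eval,
    ← sub_add_cancel (derivative^[n] (G1Poly n k a)) (derivative^[n] (G2Poly n k a)),
    ← iterate_derivative_sub, add_comm, G1Poly_sub_G2Poly hk,
    show 2 * n - 1 - k = n - 1 - k + n by omega, iterate_derivative_C_mul,
    iterate_derivative_taylorKernel, ← mul_assoc, ← C_mul, ← mul_pow, neg_one_mul, neg_neg,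
    one_pow, C_1, one_mul]

lemma iterate_derivative_iterate_derivative_G2Poly {n : ℕ} (hn : 0 < n) (k : ℕ) (a : ℝ) :
    derivative^[n] (derivative^[n] (G2Poly n k a)) = 0 := by
  rw [← Function.iterate_add_apply]
  exact iterate_derivative_eq_zero <|
    (natDegree_C_mul_le _ _).trans_lt ((natDegree_splinePoly_le n k a).trans_lt (by omega))

theorem stmt0 (n k : ℕ) (hn : 1 ≤ n) (hk : k ≤ n - 1) (a : ℝ) (ha : a ∈ Set.Ioo (0 : ℝ) 1)
    (f : ℝ → ℝ) (hf : ContDiffOn ℝ n f (Set.Icc 0 1))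
    (hbc : ∀ j < n, iteratedDerivWithin j f (Set.Icc 0 1) 0 = 0 ∧
      iteratedDerivWithin j f (Set.Icc 0 1) 1 = 0) :
    iteratedDerivWithin k f (Set.Icc 0 1) a =
      (∫ x in (0 : ℝ)..a,
        iteratedDerivWithin n f (Set.Icc 0 1) x * iteratedDeriv n (G1 n k a) x) +
      ∫ x in a..(1 : ℝ),
        iteratedDerivWithin n f (Set.Icc 0 1) x * iteratedDeriv n (G2 n k a) x := by
  have hk' : k < n := by omega
  have hs : UniqueDiffOn ℝ (Set.Icc (0 : ℝ) 1) := uniqueDiffOn_Icc_zero_one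
  have h0a : [[0, a]] ⊆ Set.Icc 0 1 := Set.uIcc_subset_Icc ⟨le_rfl, zero_le_one⟩ ⟨ha.1.le, ha.2.le⟩
  have ha1 : [[a, 1]] ⊆ Set.Icc 0 1 := Set.uIcc_subset_Icc ⟨ha.1.le, ha.2.le⟩ ⟨zero_le_one, le_rfl⟩
  rw [iteratedDeriv_G1 hk', iteratedDeriv_G2]
  set P := derivative^[n] (G2Poly n k a)
  set K := taylorKernel a (n - 1 - k)
  set F := iteratedDerivWithin n f (Set.Icc 0 1)
  have htaylor := hf.iteratedDerivWithin_eq_integral_mul_taylorKernel hs h0a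
    (fun j hj => (hbc j hj).1) (k := k) (i := n - 1 - k) (by omega)
  rw [show k + (n - 1 - k) + 1 = n by omega] at htaylor
  have horth : ∫ x in (0 : ℝ)..1, F x * P.eval x = 0 :=
    hf.integral_iteratedDerivWithin_mul_eval_eq_zero hs (Set.uIcc_of_le (zero_le_one' ℝ)).subset
      (fun j hj => (hbc j hj).1) (fun j hj => (hbc j hj).2) le_rfl
      (iterate_derivative_iterate_derivative_G2Poly hn k a)
  have hint : ∀ {c d : ℝ}, [[c, d]] ⊆ Set.Icc 0 1 → ∀ R : ℝ[X],
      IntervalIntegrable (fun x => F x * R.eval x) volume c d :=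
    hf.intervalIntegrable_iteratedDerivWithin_mul_eval hs le_rfl
  calc iteratedDerivWithin k f (Set.Icc 0 1) a
      = (∫ x in (0 : ℝ)..a, F x * K.eval x) + ∫ x in (0 : ℝ)..1, F x * P.eval x := by
        rw [horth, add_zero, htaylor]
    _ = _ := by
        rw [← integral_add_adjacent_intervals (hint h0a P) (hint ha1 P), ← add_assoc,
          ← integral_add (hint h0a K) (hint h0a P)]
        simp only [eval_add, mul_add, add_comm]
end

section
/- For all integers n ≥ 1 and 0 ≤ k ≤ n−1 the following identity of polynomials in the two variables x and a holds: (1−a)^{n−k}·x^n·h_{n,k}(1−x, 1−a) − (−1)^k·a^{n−k}·(1−x)^n·h_{n,k}(x, a) = (x−a)^{2n−k−1}. -/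
/-!
Fix `a` and view both sides as polynomials in `x`; their difference `D_a` has degree `< 2n`.
The inner sum of `h_{n,k}(x, a)` is the truncation after degree `l` of the series
`(1 - x)⁻ⁿ = ∑ₘ binom(n-1+m, m) xᵐ`, so modulo `xⁿ` the product `(1 - x)ⁿ h_{n,k}(x, a)` collapses
to `∑ₗ cₗ x^{n-1-l}`, and comparing with the binomial expansion of `(x - a)^{2n-k-1}` gives
`xⁿ ∣ D_a`. The substitution `x ↦ 1 - x`, `a ↦ 1 - a` turns `D_a` into `±D_{1-a}`, so also
`(1 - x)ⁿ ∣ D_a`, and therefore `D_a = 0`.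
-/

open Finset

open Polynomial
open scoped PowerSeries

namespace Polynomial

variable {R : Type*} [CommRing R]

theorem X_pow_dvd_mul_trunc_sub_one {p : R[X]} {f : R⟦X⟧}
    (h : (p : R⟦X⟧) * f = 1) (m : ℕ) : X ^ m ∣ p * PowerSeries.trunc m f - 1 := by
  set q := p * PowerSeries.trunc m f - 1
  have htrunc : PowerSeries.trunc m (q : R⟦X⟧) = 0 := by
    rw [coe_sub, coe_mul, coe_one, PowerSeries.trunc_sub, PowerSeries.trunc_mul_trunc, h,
      sub_self]
  refine X_pow_dvd_iff.2 fun d hd => ?_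
  simpa [PowerSeries.coeff_trunc, hd] using congrArg (coeff · d) htrunc

theorem comp_one_sub_X_comp_one_sub_X (p : R[X]) : (p.comp (1 - X)).comp (1 - X) = p := by
  rw [comp_assoc, sub_comp, one_comp, X_comp, sub_sub_cancel, comp_X]

theorem one_sub_X_pow_dvd_of_X_pow_dvd_comp {p : R[X]} {n : ℕ} (h : X ^ n ∣ p.comp (1 - X)) :
    (1 - X) ^ n ∣ p := by
  obtain ⟨q, hq⟩ := h
  refine ⟨q.comp (1 - X), ?_⟩
  rw [← comp_one_sub_X_comp_one_sub_X p, hq, mul_comp, pow_comp, X_comp]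

end Polynomial

section

variable (n k : ℕ) (a : ℝ)

noncomputable def hCoeff (l : ℕ) : ℝ :=
  (-1) ^ (n - 1 - l) * ((2 * n - 1 - k).choose (n - 1 - l) : ℝ) * a ^ l

noncomputable def hPolynomial : ℝ[X] :=
  ∑ l ∈ range n, C (hCoeff n k a l) * X ^ (n - 1 - l) *
    PowerSeries.trunc (l + 1) (PowerSeries.invOneSubPow ℝ n : ℝ⟦X⟧)

noncomputable def hLowTerms : ℝ[X] :=
  ∑ l ∈ range n, C (hCoeff n k a l) * X ^ (n - 1 - l)

theorem eval_hPolynomial (x : ℝ) : (hPolynomial n k a).eval x = hpoly n k x a := by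
  simp only [hPolynomial, hpoly, hCoeff, eval_finsetSum, eval_mul, eval_C, eval_pow, eval_X]
  refine sum_congr rfl fun l hl => ?_
  rw [PowerSeries.invOneSubPow_val_eq_mk_sub_one_add_choose_of_pos _ _
    (by have := mem_range.1 hl; omega), PowerSeries.trunc_apply, ← range_eq_Ico,
    eval_finsetSum]
  simp only [eval_monomial, PowerSeries.coeff_mk, Nat.choose_symm_add]
  ring

theorem natDegree_hPolynomial_le : (hPolynomial n k a).natDegree ≤ n - 1 := by
  refine natDegree_sum_le_of_forall_le _ _ fun l hl => ?_
  have hl := mem_range.1 hl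
  have htrunc := PowerSeries.natDegree_trunc_lt
    (PowerSeries.invOneSubPow ℝ n : ℝ⟦X⟧) l
  calc _ ≤ (n - 1 - l) + l := by
        refine natDegree_mul_le_of_le ((natDegree_C_mul_le _ _).trans ?_) (by omega)
        exact natDegree_X_pow_le _
    _ ≤ n - 1 := by omega

theorem X_pow_dvd_one_sub_X_pow_mul_hPolynomial_sub_hLowTerms :
    X ^ n ∣ (1 - X) ^ n * hPolynomial n k a - hLowTerms n k a := by
  have hinv : (((1 - X) ^ n : ℝ[X]) : ℝ⟦X⟧) *
      (PowerSeries.invOneSubPow ℝ n : ℝ⟦X⟧) = 1 := by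
    have h := (PowerSeries.invOneSubPow ℝ n).inv_val
    rw [PowerSeries.invOneSubPow_inv_eq_one_sub_pow] at h
    simpa using h
  rw [hPolynomial, hLowTerms, mul_sum, ← sum_sub_distrib]
  refine dvd_sum fun l hl => ?_
  have hl := mem_range.1 hl
  obtain ⟨q, hq⟩ := X_pow_dvd_mul_trunc_sub_one hinv (l + 1)
  refine ⟨C (hCoeff n k a l) * q, ?_⟩
  have hX : (X : ℝ[X]) ^ (n - 1 - l) * X ^ (l + 1) = X ^ n := by
    rw [← pow_add]
    congr 1
    omega
  linear_combination C (hCoeff n k a l) * X ^ (n - 1 - l) * hq + C (hCoeff n k a l) * q * hX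


noncomputable def hDefect : ℝ[X] :=
  C ((1 - a) ^ (n - k)) * X ^ n * (hPolynomial n k (1 - a)).comp (1 - X) -
    C ((-1) ^ k * a ^ (n - k)) * (1 - X) ^ n * hPolynomial n k a - (X - C a) ^ (2 * n - k - 1)

end

section

variable {n k : ℕ} (a : ℝ)

theorem coeff_hLowTerms {d : ℕ} (hd : d < n) :
    (hLowTerms n k a).coeff d = hCoeff n k a (n - 1 - d) := by
  rw [hLowTerms, finsetSum_coeff, sum_eq_single (n - 1 - d)]
  · rw [coeff_C_mul_X_pow, if_pos (by omega)]
  · intro l hl hne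
    rw [coeff_C_mul_X_pow, if_neg (by have := mem_range.1 hl; omega)]
  · intro h
    exact absurd (mem_range.2 (by omega)) h

theorem X_pow_dvd_X_sub_C_pow_add_hLowTerms (hn : 1 ≤ n) (hk : k ≤ n) :
    X ^ n ∣ (X - C a) ^ (2 * n - k - 1) + C ((-1) ^ k * a ^ (n - k)) * hLowTerms n k a := by
  refine X_pow_dvd_iff.2 fun d hd => ?_
  rw [coeff_add, coeff_C_mul, coeff_hLowTerms a hd, sub_eq_add_neg, ← C_neg, coeff_X_add_C_pow,
    hCoeff, show 2 * n - 1 - k = 2 * n - k - 1 by omega, show n - 1 - (n - 1 - d) = d by omega,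
    neg_pow]
  have hsign : (-1 : ℝ) ^ (2 * n - k - 1 - d) = -((-1) ^ k * (-1) ^ d) := by
    rw [← pow_add, neg_one_pow_congr (n := k + d + 1) (by simp only [Nat.even_iff]; omega),
      pow_succ, mul_neg_one]
  have hpow : a ^ (2 * n - k - 1 - d) = a ^ (n - k) * a ^ (n - 1 - d) := by
    rw [← pow_add]
    congr 1
    omega
  rw [hsign, hpow]
  ring

theorem X_pow_dvd_hDefect (hn : 1 ≤ n) (hk : k ≤ n) : X ^ n ∣ hDefect n k a := by
  have hrearrange : hDefect n k a =
      X ^ n * (C ((1 - a) ^ (n - k)) * (hPolynomial n k (1 - a)).comp (1 - X)) -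
        C ((-1) ^ k * a ^ (n - k)) * ((1 - X) ^ n * hPolynomial n k a - hLowTerms n k a) -
        ((X - C a) ^ (2 * n - k - 1) + C ((-1) ^ k * a ^ (n - k)) * hLowTerms n k a) := by
    rw [hDefect]
    ring
  rw [hrearrange]
  exact dvd_sub (dvd_sub (dvd_mul_right _ _)
    ((X_pow_dvd_one_sub_X_pow_mul_hPolynomial_sub_hLowTerms n k a).mul_left _))
    (X_pow_dvd_X_sub_C_pow_add_hLowTerms a hn hk)

theorem hDefect_comp_one_sub_X (hn : 1 ≤ n) (hk : k ≤ n) :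
    (hDefect n k a).comp (1 - X) = -C ((-1) ^ k) * hDefect n k (1 - a) := by
  have hsign : (-1 : ℝ[X]) ^ (2 * n - k - 1) = -C ((-1) ^ k) := by
    rw [neg_one_pow_congr (n := k + 1) (by simp only [Nat.even_iff]; omega), pow_succ,
      mul_neg_one, ← C_1, ← C_neg, ← C_pow]
  have hsq : C ((-1 : ℝ) ^ k) * C ((-1) ^ k) = 1 := by
    rw [← C_mul, ← mul_pow, neg_one_mul, neg_neg, one_pow, C_1]
  have hbase : (1 - X - C a : ℝ[X]) = -(X - C (1 - a)) := by
    rw [C_sub, C_1]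
    ring
  simp only [hDefect, sub_comp, mul_comp, C_comp, pow_comp, X_comp, one_comp,
    comp_one_sub_X_comp_one_sub_X, sub_sub_cancel]
  rw [hbase, neg_pow (X - C (1 - a)), hsign]
  simp only [map_mul]
  linear_combination -C ((1 - a) ^ (n - k)) * (1 - X) ^ n * hPolynomial n k (1 - a) * hsq

theorem natDegree_hDefect_lt (hn : 1 ≤ n) : (hDefect n k a).natDegree < 2 * n := by
  have hH (b : ℝ) := natDegree_hPolynomial_le n k b
  have h1X : (1 - X : ℝ[X]).natDegree ≤ 1 := by compute_degree
  have hcomp : ((hPolynomial n k (1 - a)).comp (1 - X)).natDegree ≤ n - 1 :=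
    natDegree_comp_le.trans (by simpa using Nat.mul_le_mul (hH (1 - a)) h1X)
  have hfirst : (C ((1 - a) ^ (n - k)) * X ^ n *
      (hPolynomial n k (1 - a)).comp (1 - X)).natDegree ≤ 2 * n - 1 := by
    refine (natDegree_mul_le_of_le
      ((natDegree_C_mul_le _ _).trans (natDegree_X_pow_le n)) hcomp).trans ?_
    omega
  have hsecond : (C ((-1) ^ k * a ^ (n - k)) * (1 - X) ^ n *
      hPolynomial n k a).natDegree ≤ 2 * n - 1 := by
    refine (natDegree_mul_le_of_le
      ((natDegree_C_mul_le _ _).trans (natDegree_pow_le_of_le n h1X)) (hH a)).trans ?_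
    omega
  have hthird : ((X - C a) ^ (2 * n - k - 1)).natDegree ≤ 2 * n - 1 :=
    (natDegree_pow_le_of_le _ (natDegree_X_sub_C_le a)).trans (by omega)
  have := natDegree_sub_le_of_le (natDegree_sub_le_of_le hfirst hsecond) hthird
  rw [hDefect]
  omega

theorem hDefect_eq_zero (hn : 1 ≤ n) (hk : k ≤ n) : hDefect n k a = 0 := by
  have hX : X ^ n ∣ hDefect n k a := X_pow_dvd_hDefect a hn hk
  have hOneSubX : (1 - X) ^ n ∣ hDefect n k a := by
    refine one_sub_X_pow_dvd_of_X_pow_dvd_comp ?_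
    rw [hDefect_comp_one_sub_X a hn hk]
    exact (X_pow_dvd_hDefect (1 - a) hn hk).mul_left _
  have hcop : IsCoprime ((X : ℝ[X]) ^ n) ((1 - X) ^ n) := IsCoprime.pow ⟨1, 1, by ring⟩
  refine eq_zero_of_dvd_of_natDegree_lt (hcop.mul_dvd hX hOneSubX) ?_
  have hdeg : (X ^ n * (1 - X) ^ n : ℝ[X]).natDegree = 2 * n := by
    compute_degree!
    all_goals omega
  exact hdeg ▸ natDegree_hDefect_lt a hn

end

theorem stmt1 (n k : ℕ) (hn : 1 ≤ n) (hk : k ≤ n - 1) :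
    ∀ x a : ℝ,
      (1 - a) ^ (n - k) * x ^ n * hpoly n k (1 - x) (1 - a) -
        (-1 : ℝ) ^ k * a ^ (n - k) * (1 - x) ^ n * hpoly n k x a =
      (x - a) ^ (2 * n - k - 1) := by
  intro x a
  have h := congrArg (eval x) (hDefect_eq_zero a hn (by omega : k ≤ n))
  simp only [hDefect, eval_sub, eval_mul, eval_C, eval_pow, eval_X, eval_comp, eval_one,
    eval_hPolynomial, eval_zero] at h
  linear_combination h
end

section
/- Let n ≥ 4 be an integer, and set t₁(n) := (−(n−2)(2n−3) − √(3(n−2)(2n−3)))/(2(2n−1)(2n−3)) and t₂(n) := (−(n−2)(2n−3) + √(3(n−2)(2n−3)))/(2(2n−1)(2n−3)). Then f_{n,3}(t₁(n)) > f_{n,3}(t₂(n)). -/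
/-!
Both points are the roots of `4(2n−1)(2n−3)t² + 4(n−2)(2n−3)t + (n−2)(n−3)`, i.e. `t = (σ − b)/D` with
`b = (n−2)(2n−3)`, `D = 2(2n−1)(2n−3)` and `σ = ±s`, `s² = 3(n−2)(2n−3)`. Reducing the cubic factor of
`f_{n,3}` modulo this quadratic and using that `k = 2n − 7` is odd gives
`f_{n,3}(t) · D^(k+3) = (b − σ)^k · C · (M + kσ)` with `C > 0` and `M = 3(n−2)(2n−5)`.
The claim becomes `(b − s)^k (M + ks) < (b + s)^k (M − ks)`, which follows from the second-order Bernoulli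
inequality for `(b + s)^k = ((b − s) + 2s)^k` and a polynomial inequality in `n` and `s`.
-/

/-- The function `f_{n,3}(t)`, equal to `A²_{n,3}` (in the variable `t = a² − a`)
multiplied by `((n−2)!)²(2n−7)`. -/
noncomputable def f3 (n : ℕ) (t : ℝ) : ℝ :=
  -t ^ (2 * n - 7) *
    (4 * (2 * (n : ℝ) - 1) * (2 * (n : ℝ) - 3) ^ 2 * (2 * (n : ℝ) - 7) * t ^ 3 +
     12 * ((n : ℝ) - 1) * ((n : ℝ) - 2) * (2 * (n : ℝ) - 3) * (2 * (n : ℝ) - 7) * t ^ 2 +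
     3 * ((n : ℝ) - 2) ^ 2 * (2 * (n : ℝ) - 3) * (2 * (n : ℝ) - 7) * t +
     ((n : ℝ) - 2) ^ 2 * ((n : ℝ) - 3) ^ 2)

theorem pow_mul_second_order_le_sq_mul_add_pow {R : Type*} [Field R] [LinearOrder R]
    [IsStrictOrderedRing R] {a h : R} (ha : 0 ≤ a) (hh : 0 ≤ h) (k : ℕ) :
    a ^ k * (a ^ 2 + k * a * h + k * (k - 1) / 2 * h ^ 2) ≤ a ^ 2 * (a + h) ^ k := by
  induction k with
  | zero => simp
  | succ k ih =>
    have hk : (0 : R) ≤ k * (k - 1) := by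
      rcases k with _ | k
      · simp
      · push_cast
        rw [add_sub_cancel_right]
        positivity
    have hrest : 0 ≤ k * (k - 1) / 2 * h ^ 3 * a ^ k := by positivity
    calc a ^ (k + 1) * (a ^ 2 + ↑(k + 1) * a * h + ↑(k + 1) * (↑(k + 1) - 1) / 2 * h ^ 2)
        = a ^ k * (a ^ 2 + k * a * h + k * (k - 1) / 2 * h ^ 2) * (a + h)
            - k * (k - 1) / 2 * h ^ 3 * a ^ k := by
          push_cast
          ring
      _ ≤ a ^ 2 * (a + h) ^ k * (a + h) := by
          linarith [mul_le_mul_of_nonneg_right ih (add_nonneg ha hh)]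
      _ = a ^ 2 * (a + h) ^ (k + 1) := by ring

theorem cubic_factor_eq_of_sq_eq {N σ : ℝ} (hσ : σ ^ 2 = 3 * (N - 2) * (2 * N - 3)) :
    4 * (2 * N - 1) * (2 * N - 3) ^ 2 * (2 * N - 7) * (σ - (N - 2) * (2 * N - 3)) ^ 3 +
        12 * (N - 1) * (N - 2) * (2 * N - 3) * (2 * N - 7) * (σ - (N - 2) * (2 * N - 3)) ^ 2 *
          (2 * (2 * N - 1) * (2 * N - 3)) +
        3 * (N - 2) ^ 2 * (2 * N - 3) * (2 * N - 7) * (σ - (N - 2) * (2 * N - 3)) *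
          (2 * (2 * N - 1) * (2 * N - 3)) ^ 2 +
        (N - 2) ^ 2 * (N - 3) ^ 2 * (2 * (2 * N - 1) * (2 * N - 3)) ^ 3 =
      12 * (N - 2) * (2 * N - 1) * (2 * N - 3) ^ 3 *
        (3 * (N - 2) * (2 * N - 5) + (2 * N - 7) * σ) := by
  linear_combination (192 * N ^ 5 + 64 * N ^ 4 * σ - 1728 * N ^ 4 - 448 * N ^ 3 * σ
    + 5760 * N ^ 3 + 1024 * N ^ 2 * σ - 8880 * N ^ 2 - 912 * N * σ + 6228 * N + 252 * σ - 1512) * hσ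

theorem f3_mul_pow_eq_of_sq_eq {n : ℕ} (hn : 4 ≤ n) {σ : ℝ}
    (hσ : σ ^ 2 = 3 * ((n : ℝ) - 2) * (2 * n - 3)) :
    f3 n ((-(((n : ℝ) - 2) * (2 * n - 3)) + σ) / (2 * (2 * n - 1) * (2 * n - 3))) *
        (2 * (2 * (n : ℝ) - 1) * (2 * n - 3)) ^ (2 * n - 4) =
      ((n - 2) * (2 * n - 3) - σ) ^ (2 * n - 7) *
        (12 * (n - 2) * (2 * n - 1) * (2 * n - 3) ^ 3 *
          (3 * (n - 2) * (2 * n - 5) + (2 * n - 7) * σ)) := by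
  have hN : (4 : ℝ) ≤ n := by exact_mod_cast hn
  set D : ℝ := 2 * (2 * n - 1) * (2 * n - 3) with hD
  set t := (-(((n : ℝ) - 2) * (2 * n - 3)) + σ) / D
  have ht : t * D = σ - (n - 2) * (2 * n - 3) := by
    rw [div_mul_cancel₀ _ (by nlinarith)]
    ring
  have hodd : Odd (2 * n - 7) := ⟨n - 4, by omega⟩
  have hexp : 2 * n - 4 = (2 * n - 7) + 3 := by omega
  clear_value t D
  calc f3 n t * D ^ (2 * n - 4)
      = -(t * D) ^ (2 * n - 7) *
          (4 * (2 * n - 1) * (2 * n - 3) ^ 2 * (2 * n - 7) * (t * D) ^ 3 +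
            12 * (n - 1) * (n - 2) * (2 * n - 3) * (2 * n - 7) * (t * D) ^ 2 * D +
            3 * (n - 2) ^ 2 * (2 * n - 3) * (2 * n - 7) * (t * D) * D ^ 2 +
            (n - 2) ^ 2 * (n - 3) ^ 2 * D ^ 3) := by
        rw [f3, hexp]
        ring
    _ = _ := by
        rw [ht, hD, cubic_factor_eq_of_sq_eq hσ, ← neg_sub, hodd.neg_pow, neg_neg]

theorem sq_mul_add_lt_second_order_mul_sub {N s : ℝ} (hN : 4 ≤ N) (hs : 0 ≤ s)
    (hs2 : s ^ 2 = 3 * (N - 2) * (2 * N - 3)) :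
    ((N - 2) * (2 * N - 3) - s) ^ 2 * (3 * (N - 2) * (2 * N - 5) + (2 * N - 7) * s) <
      (((N - 2) * (2 * N - 3) - s) ^ 2 + (2 * N - 7) * ((N - 2) * (2 * N - 3) - s) * (2 * s) +
          (2 * N - 7) * (2 * N - 7 - 1) / 2 * (2 * s) ^ 2) *
        (3 * (N - 2) * (2 * N - 5) - (2 * N - 7) * s) := by
  have hs_ge : N ≤ s := by nlinarith
  have hs_lt : s < 5 * N / 2 := by nlinarith
  have hm : 0 ≤ N - 4 := by linarith
  have hlow : 0 < 128 * N ^ 6 - 2112 * N ^ 5 + 14592 * N ^ 4 - 53968 * N ^ 3 + 112008 * N ^ 2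
      - 122400 * N + 54432 := by
    nlinarith [pow_nonneg hm 3, pow_nonneg hm 4, pow_nonneg hm 5, pow_nonneg hm 6]
  have hhigh : 0 < 32 * N ^ 6 - 528 * N ^ 5 + 4728 * N ^ 4 - 24940 * N ^ 3 + 71688 * N ^ 2
      - 101232 * N + 54432 := by
    nlinarith [pow_nonneg hm 3, pow_nonneg hm 4, pow_nonneg hm 5, pow_nonneg hm 6]
  -- Modulo `s²` the difference is linear in `s`, so on `N ≤ s < 5N/2` it is a convex combination
  -- of its values `hlow`, `hhigh` at the two endpoints.
  have hinterp : 3 * N / 2 * ((((N - 2) * (2 * N - 3) - s) ^ 2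
      + (2 * N - 7) * ((N - 2) * (2 * N - 3) - s) * (2 * s)
      + (2 * N - 7) * (2 * N - 7 - 1) / 2 * (2 * s) ^ 2) *
        (3 * (N - 2) * (2 * N - 5) - (2 * N - 7) * s)
      - ((N - 2) * (2 * N - 3) - s) ^ 2 * (3 * (N - 2) * (2 * N - 5) + (2 * N - 7) * s))
      = (5 * N / 2 - s) * (128 * N ^ 6 - 2112 * N ^ 5 + 14592 * N ^ 4 - 53968 * N ^ 3
          + 112008 * N ^ 2 - 122400 * N + 54432)
        + (s - N) * (32 * N ^ 6 - 528 * N ^ 5 + 4728 * N ^ 4 - 24940 * N ^ 3 + 71688 * N ^ 2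
          - 101232 * N + 54432) := by
    linear_combination 3 * N / 2 * (32 * N ^ 4 - 16 * N ^ 3 * s - 416 * N ^ 3 + 184 * N ^ 2 * s
      + 1976 * N ^ 2 - 704 * N * s - 4056 * N + 896 * s + 3024) * hs2
  nlinarith [mul_pos (sub_pos.2 hs_lt) hlow, mul_nonneg (sub_nonneg.2 hs_ge) hhigh.le]

theorem pow_mul_add_lt_pow_mul_sub {n : ℕ} (hn : 4 ≤ n) {s : ℝ} (hs : 0 ≤ s)
    (hs2 : s ^ 2 = 3 * ((n : ℝ) - 2) * (2 * n - 3)) :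
    ((n - 2) * (2 * n - 3) - s) ^ (2 * n - 7) * (3 * (n - 2) * (2 * n - 5) + (2 * n - 7) * s) <
      ((n - 2) * (2 * n - 3) + s) ^ (2 * n - 7) *
        (3 * (n - 2) * (2 * n - 5) - (2 * n - 7) * s) := by
  have hN : (4 : ℝ) ≤ n := by exact_mod_cast hn
  have hk : ((2 * n - 7 : ℕ) : ℝ) = 2 * n - 7 := by
    rw [Nat.cast_sub (by omega)]
    push_cast
    ring
  have ha : 0 < (n - 2) * (2 * n - 3) - s := by
    have hb : 3 < ((n : ℝ) - 2) * (2 * n - 3) := by nlinarith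
    nlinarith
  have hM : 0 < 3 * (n - 2) * (2 * n - 5) - (2 * n - 7) * s := by
    have hs_lt : s < 5 * n / 2 := by nlinarith
    nlinarith [mul_lt_mul_of_pos_left hs_lt (by linarith : (0 : ℝ) < 2 * n - 7)]
  have hbern := pow_mul_second_order_le_sq_mul_add_pow ha.le (by linarith : 0 ≤ 2 * s) (2 * n - 7)
  rw [hk, show (n - 2) * (2 * n - 3) - s + 2 * s = (n - 2) * (2 * n - 3) + s by ring] at hbern
  have hkey := sq_mul_add_lt_second_order_mul_sub hN hs hs2
  generalize 2 * n - 7 = k at hbern ⊢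
  set a := ((n : ℝ) - 2) * (2 * n - 3) - s
  set B := ((n : ℝ) - 2) * (2 * n - 3) + s
  set Q := a ^ 2 + (2 * (n : ℝ) - 7) * a * (2 * s) + (2 * n - 7) * (2 * n - 7 - 1) / 2 * (2 * s) ^ 2
  refine lt_of_mul_lt_mul_left ?_ (sq_nonneg a)
  calc a ^ 2 * (a ^ k * (3 * (n - 2) * (2 * n - 5) + (2 * n - 7) * s))
      = a ^ k * (a ^ 2 * (3 * (n - 2) * (2 * n - 5) + (2 * n - 7) * s)) := by ring
    _ < a ^ k * (Q * (3 * (n - 2) * (2 * n - 5) - (2 * n - 7) * s)) :=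
        mul_lt_mul_of_pos_left hkey (pow_pos ha _)
    _ ≤ a ^ 2 * B ^ k * (3 * (n - 2) * (2 * n - 5) - (2 * n - 7) * s) := by
        rw [← mul_assoc]
        exact mul_le_mul_of_nonneg_right hbern hM.le
    _ = a ^ 2 * (B ^ k * (3 * (n - 2) * (2 * n - 5) - (2 * n - 7) * s)) := by ring

theorem stmt7 (n : ℕ) (hn : 4 ≤ n) :
    f3 n ((-(((n : ℝ) - 2) * (2 * (n : ℝ) - 3)) -
        Real.sqrt (3 * ((n : ℝ) - 2) * (2 * (n : ℝ) - 3))) /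
      (2 * (2 * (n : ℝ) - 1) * (2 * (n : ℝ) - 3))) >
    f3 n ((-(((n : ℝ) - 2) * (2 * (n : ℝ) - 3)) +
        Real.sqrt (3 * ((n : ℝ) - 2) * (2 * (n : ℝ) - 3))) /
      (2 * (2 * (n : ℝ) - 1) * (2 * (n : ℝ) - 3))) := by
  have hN : (4 : ℝ) ≤ n := by exact_mod_cast hn
  set s := Real.sqrt (3 * ((n : ℝ) - 2) * (2 * n - 3))
  have hs : 0 ≤ s := Real.sqrt_nonneg _
  have hs2 : s ^ 2 = 3 * ((n : ℝ) - 2) * (2 * n - 3) := Real.sq_sqrt (by nlinarith)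
  have hminus := f3_mul_pow_eq_of_sq_eq hn (σ := -s) (by rw [neg_sq, hs2])
  simp only [sub_neg_eq_add, mul_neg, ← sub_eq_add_neg] at hminus
  have hplus := f3_mul_pow_eq_of_sq_eq hn hs2
  have hC : 0 < 12 * ((n : ℝ) - 2) * (2 * n - 1) * (2 * n - 3) ^ 3 := by
    have : (0 : ℝ) < 2 * n - 3 := by linarith
    nlinarith [pow_pos this 3]
  refine lt_of_mul_lt_mul_right ?_ (pow_pos (by nlinarith : (0 : ℝ) < 2 * (2 * n - 1) * (2 * n - 3))
    (2 * n - 4)).le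
  rw [hminus, hplus]
  linarith [mul_lt_mul_of_pos_left (pow_mul_add_lt_pow_mul_sub hn hs hs2) hC]
end

section
/- Let m ≥ 0 and k ≥ 0 be integers with k ≤ m. If k = 2l is even, then there exist real numbers a₀,…,a_l such that, as an identity of real polynomials in x, d^k/dx^k [(x²−x)^m] = ∑_{j=0}^{l} a_j·(x²−x)^{m−l−j}·(2x−1)^{2j}. If k = 2l+1 is odd, then there exist real numbers b₀,…,b_l such that d^k/dx^k [(x²−x)^m] = (2x−1)·∑_{j=0}^{l} b_j·(x²−x)^{m−l−j−1}·(2x−1)^{2j}. -/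
/-!
Write `P = X² - X` and `Q = 2X - 1`, so that `P' = Q` and `Q' = 2`. Differentiating a monomial
`P^(m-l-j) Q^(2j)` gives a combination of `P^(m-l-j-1) Q^(2j+1)` and `P^(m-l-(j-1)-1) Q^(2j-1)`,
and differentiating `P^(m-l-j-1) Q^(2j+1)` gives a combination of `P^(m-(l+1)-j) Q^(2j)` and
`P^(m-(l+1)-(j+1)) Q^(2(j+1))`. Hence the spans of these two families of monomials are swapped by
the derivative while `l` increases every other step, and `(X² - X)^m` lies in the first one for `l = 0`.
Truncated subtraction in the exponents is harmless, since a vanishing exponent comes with a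
vanishing coefficient.
-/

open Polynomial Submodule Finset

noncomputable section

namespace Polynomial

variable {R : Type*} [CommRing R] (p q : R[X])

def evenSpan (m l : ℕ) : Submodule R R[X] :=
  span R ((fun j => p ^ (m - l - j) * q ^ (2 * j)) '' ↑(range (l + 1)))

def oddSpan (m l : ℕ) : Submodule R R[X] :=
  span R ((fun j => p ^ (m - l - j - 1) * q ^ (2 * j + 1)) '' ↑(range (l + 1)))

variable {p q} {c : R}

theorem derivative_pow_mul_pow (hp : derivative p = q) (hq : derivative q = C c) (n e : ℕ) :
    derivative (p ^ n * q ^ e) =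
      (n : R[X]) * (p ^ (n - 1) * q ^ (e + 1)) + (e : R[X]) * C c * (p ^ n * q ^ (e - 1)) := by
  rw [derivative_mul, derivative_pow, derivative_pow, hp, hq, map_natCast, map_natCast]
  ring

theorem natCast_mul_mem {S : Submodule R R[X]} (n : ℕ) {x : R[X]} (hx : x ∈ S) :
    (n : R[X]) * x ∈ S := by
  rw [← nsmul_eq_mul]
  exact S.nsmul_mem hx n

theorem natCast_mul_C_mul_mem {S : Submodule R R[X]} (n : ℕ) {x : R[X]} (hx : x ∈ S) :
    (n : R[X]) * C c * x ∈ S := by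
  rw [mul_assoc, ← smul_eq_C_mul]
  exact natCast_mul_mem n (S.smul_mem c hx)

theorem derivative_mem_oddSpan (hp : derivative p = q) (hq : derivative q = C c) {m l : ℕ}
    {x : R[X]} (hx : x ∈ evenSpan p q m l) : derivative x ∈ oddSpan p q m l := by
  refine (span_le (p := (oddSpan p q m l).comap derivative)).mpr ?_ hx
  rintro _ ⟨j, hj, rfl⟩
  rw [SetLike.mem_coe, mem_comap, derivative_pow_mul_pow hp hq]
  refine add_mem (natCast_mul_mem _ (subset_span ⟨j, hj, rfl⟩)) ?_
  rcases j with _ | i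
  · simp
  · refine natCast_mul_C_mul_mem _ (subset_span ⟨i, ?_, ?_⟩)
    · simp only [coe_range, Set.mem_Iio] at hj ⊢
      omega
    · dsimp only
      rw [show m - l - i - 1 = m - l - (i + 1) by omega, show 2 * i + 1 = 2 * (i + 1) - 1 by omega]

theorem derivative_mem_evenSpan_succ (hp : derivative p = q) (hq : derivative q = C c)
    {m l : ℕ} {x : R[X]} (hx : x ∈ oddSpan p q m l) : derivative x ∈ evenSpan p q m (l + 1) := by
  refine (span_le (p := (evenSpan p q m (l + 1)).comap derivative)).mpr ?_ hx
  rintro _ ⟨j, hj, rfl⟩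
  simp only [coe_range, Set.mem_Iio] at hj
  rw [SetLike.mem_coe, mem_comap, derivative_pow_mul_pow hp hq]
  refine add_mem (natCast_mul_mem _ (subset_span ⟨j + 1, by simpa using hj, ?_⟩))
    (natCast_mul_C_mul_mem _ (subset_span ⟨j, by simp; omega, ?_⟩))
  · dsimp only
    rw [show m - (l + 1) - (j + 1) = m - l - j - 1 - 1 by omega,
      show 2 * (j + 1) = 2 * j + 1 + 1 by omega]
  · dsimp only
    rw [show m - (l + 1) - j = m - l - j - 1 by omega, Nat.add_sub_cancel]

theorem iterate_derivative_pow_mem_evenSpan (hp : derivative p = q) (hq : derivative q = C c)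
    (m l : ℕ) : derivative^[2 * l] (p ^ m) ∈ evenSpan p q m l := by
  induction l with
  | zero => exact subset_span ⟨0, by simp, by simp⟩
  | succ l ih =>
    rw [show 2 * (l + 1) = 2 * l + 1 + 1 by ring, Function.iterate_succ_apply',
      Function.iterate_succ_apply']
    exact derivative_mem_evenSpan_succ hp hq (derivative_mem_oddSpan hp hq ih)

end Polynomial

end

theorem stmt12_general (m k : ℕ) :
    (∀ l : ℕ, k = 2 * l →
      ∃ a : ℕ → ℝ,
        derivative^[k] ((X ^ 2 - X : Polynomial ℝ) ^ m) =
          ∑ j ∈ Finset.range (l + 1),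
            C (a j) * (X ^ 2 - X) ^ (m - l - j) * (2 * X - 1) ^ (2 * j)) ∧
    (∀ l : ℕ, k = 2 * l + 1 →
      ∃ b : ℕ → ℝ,
        derivative^[k] ((X ^ 2 - X : Polynomial ℝ) ^ m) =
          (2 * X - 1) *
            ∑ j ∈ Finset.range (l + 1),
              C (b j) * (X ^ 2 - X) ^ (m - l - j - 1) * (2 * X - 1) ^ (2 * j)) := by
  have hp : derivative (X ^ 2 - X : ℝ[X]) = 2 * X - 1 := by
    rw [derivative_sub, derivative_X_sq, derivative_X, C_ofNat]
  have hq : derivative (2 * X - 1 : ℝ[X]) = C 2 := by simp [C_ofNat]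
  have heven := iterate_derivative_pow_mem_evenSpan hp hq m
  refine ⟨fun l hl => ?_, fun l hl => ?_⟩
  · obtain ⟨a, ha⟩ := (mem_span_image_finset_iff_exists_fun' ℝ).mp (heven l)
    refine ⟨a, hl ▸ ha.symm.trans (sum_congr rfl fun j _ => ?_)⟩
    rw [smul_eq_C_mul, mul_assoc]
  · obtain ⟨b, hb⟩ := (mem_span_image_finset_iff_exists_fun' ℝ).mp
      (derivative_mem_oddSpan hp hq (heven l))
    refine ⟨b, ?_⟩
    rw [hl, Function.iterate_succ_apply', ← hb, mul_sum]
    refine sum_congr rfl fun j _ => ?_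
    rw [smul_eq_C_mul, pow_succ]
    ring

theorem stmt12 (m k : ℕ) (hk : k ≤ m) :
    (∀ l : ℕ, k = 2 * l →
      ∃ a : ℕ → ℝ,
        derivative^[k] ((X ^ 2 - X : Polynomial ℝ) ^ m) =
          ∑ j ∈ Finset.range (l + 1),
            C (a j) * (X ^ 2 - X) ^ (m - l - j) * (2 * X - 1) ^ (2 * j)) ∧
    (∀ l : ℕ, k = 2 * l + 1 →
      ∃ b : ℕ → ℝ,
        derivative^[k] ((X ^ 2 - X : Polynomial ℝ) ^ m) =
          (2 * X - 1) *
            ∑ j ∈ Finset.range (l + 1),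
              C (b j) * (X ^ 2 - X) ^ (m - l - j - 1) * (2 * X - 1) ^ (2 * j)) :=
  stmt12_general m k
end

section
/- Let n ≥ 2 and 1 ≤ k ≤ n−1 be integers. There exists a real polynomial Q in one variable T such that, as an identity of polynomials in x, (d^{k−1}/dx^{k−1} [(x²−x)^{n−1}])² = Q(x²−x), the degree of Q is exactly 2n−k−1, the coefficients of Q of degree strictly less than 2(n−k) all vanish, and the coefficient of Q of degree 2(n−k) is nonzero. (Equivalently, the square of the antiderivative P_{n−1}^{(k−n)} of the shifted Legendre polynomial P_{n−1} is a polynomial in t = x²−x of degree 2n−k−1 whose lowest-order term has degree 2(n−k).) -/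
/-!
Write `u = X² - X` and `g = D^(k-1) u^(n-1)`. The reflection `x ↦ 1 - x` fixes `u` and multiplies
each derivative by `-1`, so it fixes `g²`; shifted by `1/2`, `g²` becomes even, hence a polynomial
in `(x - 1/2)² = u + 1/4`, i.e. `g² = Q(u)`. Degrees multiply under composition, so
`deg Q = deg g = 2n - k - 1`. Since `u` vanishes to order exactly one at `0`, composing with `u`
preserves the order of vanishing at `0`, so `Q` vanishes there to the order `2(n - k)` of `g²`:
`u^(n-1)` vanishes to order `n - 1`, and in characteristic zero each derivative lowers it by one.
-/

namespace Polynomial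

theorem natTrailingDegree_pow {R : Type*} [Semiring R] [NoZeroDivisors R] (p : R[X]) (n : ℕ) :
    (p ^ n).natTrailingDegree = n * p.natTrailingDegree := by
  rcases eq_or_ne p 0 with rfl | hp
  · cases n <;> simp
  induction n with
  | zero => simp
  | succ n ih => rw [pow_succ, natTrailingDegree_mul (pow_ne_zero n hp) hp, ih, add_one_mul]

section Domain

variable {R : Type*} [CommRing R] [NoZeroDivisors R]

theorem natTrailingDegree_comp_of_coeff_zero_eq_zero {p q : R[X]} (hq : q.coeff 0 = 0) :
    (p.comp q).natTrailingDegree = p.natTrailingDegree * q.natTrailingDegree := by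
  rcases eq_or_ne p 0 with rfl | hp
  · simp
  rcases eq_or_ne q 0 with rfl | hq0
  · simp [comp_zero]
  obtain ⟨r, hpr, hXr⟩ := exists_eq_pow_rootMultiplicity_mul_and_not_dvd p hp 0
  rw [C_0, sub_zero, rootMultiplicity_eq_natTrailingDegree'] at hpr
  rw [C_0, sub_zero, X_dvd_iff] at hXr
  have hrq : (r.comp q).coeff 0 ≠ 0 := by
    rwa [coeff_zero_eq_eval_zero, eval_comp, ← coeff_zero_eq_eval_zero, hq,
      ← coeff_zero_eq_eval_zero]
  have hrq0 : r.comp q ≠ 0 := fun h => hrq (by rw [h, coeff_zero])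
  conv_lhs => rw [hpr, mul_comp, pow_comp, X_comp]
  rw [natTrailingDegree_mul (pow_ne_zero _ hq0) hrq0, natTrailingDegree_pow,
    natTrailingDegree_eq_zero.mpr (Or.inr hrq), add_zero]

theorem natTrailingDegree_iterate_derivative [CharZero R] {p : R[X]} {j : ℕ}
    (hj : j ≤ p.natTrailingDegree) :
    (derivative^[j] p).natTrailingDegree = p.natTrailingDegree - j := by
  induction j with
  | zero => rfl
  | succ j ih =>
    have ih := ih (by omega)
    have hroot : (derivative^[j] p).IsRoot 0 := by
      rw [IsRoot, ← coeff_zero_eq_eval_zero]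
      exact (natTrailingDegree_ne_zero.mp (by omega)).2
    rw [Function.iterate_succ_apply', ← rootMultiplicity_eq_natTrailingDegree',
      derivative_rootMultiplicity_of_root hroot, rootMultiplicity_eq_natTrailingDegree', ih]
    omega

theorem expand_two_contract_of_comp_neg_X [NeZero (2 : R)] {p : R[X]} (hp : p.comp (-X) = p) :
    expand R 2 (contract 2 p) = p := by
  ext n
  rw [coeff_expand two_pos, coeff_contract two_ne_zero]
  split_ifs with h
  · rw [Nat.div_mul_cancel h]
  · have hn : p.coeff n * (-1) ^ n = p.coeff n := by
      rw [← comp_C_mul_X_coeff, C_neg, C_1, neg_one_mul, hp]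
    rw [Odd.neg_one_pow (Nat.not_even_iff_odd.mp (even_iff_two_dvd.not.mpr h)), mul_neg_one,
      neg_eq_iff_add_eq_zero, ← two_mul] at hn
    exact ((mul_eq_zero.mp hn).resolve_left two_ne_zero).symm

end Domain

theorem natDegree_iterate_derivative_eq {R : Type*} [Semiring R] [IsAddTorsionFree R]
    (p : R[X]) (j : ℕ) :
    (derivative^[j] p).natDegree = p.natDegree - j := by
  induction j with
  | zero => rfl
  | succ j ih => rw [Function.iterate_succ_apply', natDegree_derivative, ih, Nat.sub_sub]

theorem sq_iterate_derivative_comp_one_sub_X {R : Type*} [CommRing R] {p : R[X]}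
    (hp : p.comp (1 - X) = p) (j : ℕ) :
    ((derivative^[j] p) ^ 2).comp (1 - X) = (derivative^[j] p) ^ 2 := by
  have h := iterate_derivative_comp_one_sub_X p j
  rw [hp] at h
  rw [pow_comp]
  conv_rhs => rw [h]
  rw [mul_pow, ← pow_mul, mul_comm j, pow_mul, neg_one_sq, one_pow, one_mul]

theorem exists_eq_comp_X_sq_sub_X_of_comp_one_sub_X {K : Type*} [Field K] [NeZero (2 : K)]
    {p : K[X]} (hp : p.comp (1 - X) = p) : ∃ Q : K[X], p = Q.comp (X ^ 2 - X) := by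
  set h : K[X] := C 2⁻¹
  have h2 : 2 * h = 1 := by rw [← C_ofNat, ← C_mul, mul_inv_cancel₀ two_ne_zero, C_1]
  set q := p.comp (X + h)
  have hq : q.comp (-X) = q := by
    have hreflect : (X + h).comp (-X) = (1 - X : K[X]).comp (X + h) := by
      simp only [add_comp, sub_comp, X_comp, C_comp, one_comp, h]
      linear_combination h2
    rw [comp_assoc, hreflect, ← comp_assoc, hp]
  refine ⟨(contract 2 q).comp (X + h ^ 2), ?_⟩
  have hsquare : (X ^ 2 : K[X]).comp (X - h) = (X + h ^ 2).comp (X ^ 2 - X) := by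
    simp only [add_comp, pow_comp, X_comp, C_comp, h]
    linear_combination (-X : K[X]) * h2
  calc p = q.comp (X - h) := by rw [comp_assoc, add_comp, X_comp, C_comp, sub_add_cancel, comp_X]
    _ = (expand K 2 (contract 2 q)).comp (X - h) := by rw [expand_two_contract_of_comp_neg_X hq]
    _ = _ := by rw [expand_eq_comp_X_pow, comp_assoc, hsquare, comp_assoc]

theorem exists_sq_iterate_derivative_pow_X_sq_sub_X_eq_comp {K : Type*} [Field K] [CharZero K]
    {m j : ℕ} (hjm : j < m) :
    ∃ Q : K[X], (derivative^[j] ((X ^ 2 - X : K[X]) ^ m)) ^ 2 = Q.comp (X ^ 2 - X) ∧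
      Q.natDegree = 2 * m - j ∧ Q.natTrailingDegree = 2 * (m - j) ∧ Q ≠ 0 := by
  set u : K[X] := X ^ 2 - X
  set g := derivative^[j] (u ^ m)
  have hu_deg : u.natDegree = 2 := by
    rw [natDegree_sub_eq_left_of_natDegree_lt] <;> simp
  have hu_coeff : u.coeff 0 = 0 := by simp [u]
  have hu_tdeg : u.natTrailingDegree = 1 := by
    have hu : u ≠ 0 := fun h => by rw [h, natDegree_zero] at hu_deg; omega
    refine le_antisymm (natTrailingDegree_le_of_ne_zero (by simp [u, coeff_X])) ?_
    exact Nat.one_le_iff_ne_zero.mpr (natTrailingDegree_ne_zero.mpr ⟨hu, hu_coeff⟩)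
  have hu_symm : (u ^ m).comp (1 - X) = u ^ m := by
    rw [pow_comp]; congr 1; simp only [u, sub_comp, pow_comp, X_comp]; ring
  have hg_deg : g.natDegree = 2 * m - j := by
    rw [natDegree_iterate_derivative_eq, natDegree_pow, hu_deg, mul_comm]
  have hg_tdeg : g.natTrailingDegree = m - j := by
    rw [natTrailingDegree_iterate_derivative] <;> rw [natTrailingDegree_pow, hu_tdeg, mul_one]
    omega
  have hg : g ≠ 0 := fun h => by rw [h, natDegree_zero] at hg_deg; omega
  obtain ⟨Q, hQ⟩ := exists_eq_comp_X_sq_sub_X_of_comp_one_sub_X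
    (sq_iterate_derivative_comp_one_sub_X hu_symm j)
  refine ⟨Q, hQ, ?_, ?_, ?_⟩
  · have h := congrArg natDegree hQ
    rw [natDegree_pow, hg_deg, natDegree_comp, hu_deg] at h
    omega
  · have h := congrArg natTrailingDegree hQ
    rw [natTrailingDegree_pow, hg_tdeg, natTrailingDegree_comp_of_coeff_zero_eq_zero hu_coeff,
      hu_tdeg] at h
    omega
  · rintro rfl
    exact pow_ne_zero 2 hg (by rw [hQ, zero_comp])

end Polynomial

open Polynomial

theorem stmt13_general (n k : ℕ) (hk1 : 1 ≤ k) (hk : k ≤ n - 1) :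
    ∃ Q : Polynomial ℝ,
      (derivative^[k - 1] ((X ^ 2 - X : Polynomial ℝ) ^ (n - 1))) ^ 2 =
        Q.comp (X ^ 2 - X) ∧
      Q.natDegree = 2 * n - k - 1 ∧
      (∀ i < 2 * (n - k), Q.coeff i = 0) ∧
      Q.coeff (2 * (n - k)) ≠ 0 := by
  obtain ⟨Q, hQ, hdeg, htdeg, hQ0⟩ :=
    exists_sq_iterate_derivative_pow_X_sq_sub_X_eq_comp (K := ℝ) (m := n - 1) (j := k - 1)
      (by omega)
  have htdeg' : Q.natTrailingDegree = 2 * (n - k) := by rw [htdeg]; omega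
  refine ⟨Q, hQ, by omega, fun i hi => coeff_eq_zero_of_lt_natTrailingDegree (htdeg' ▸ hi), ?_⟩
  rw [← htdeg']
  exact coeff_natTrailingDegree_ne_zero.mpr hQ0

theorem stmt13 (n k : ℕ) (hn : 2 ≤ n) (hk1 : 1 ≤ k) (hk : k ≤ n - 1) :
    ∃ Q : Polynomial ℝ,
      (derivative^[k - 1] ((X ^ 2 - X : Polynomial ℝ) ^ (n - 1))) ^ 2 =
        Q.comp (X ^ 2 - X) ∧
      Q.natDegree = 2 * n - k - 1 ∧
      (∀ i < 2 * (n - k), Q.coeff i = 0) ∧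
      Q.coeff (2 * (n - k)) ≠ 0 :=
  stmt13_general n k hk1 hk
end
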